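/- arXiv:1111.4777 — 2 statements merged into one kernel-verified Lean document; each statement's English description precedes it below -/
import Mathlib

section
/- Let R be a commutative ring, and for i = 1,…,n suppose O_i ∈ X·Z_i + R[Z₁,…,Z_n] (i.e. O_i = X·Z_i + f_i with f_i ∈ R[Z₁,…,Z_n]). Then R[X, Z₁,…,Z_n] = (O₁,…,O_n) + R[X] + R[Z₁,…,Z_n], where (O₁,…,O_n) is the ideal generated by the O_i. -/
/-!
Every monomial is `X ^ a * m` with `m` a monomial in the `Z`'s. Modulo the ideal, `X * Z_i` is
the polynomial `-f_i` in the `Z`'s, so each factor `X` can be traded for a factor `Z_i` of `m`, at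
the cost of an element of the ideal. Iterating, what survives is either a pure power of `X`
(when `m` runs out first) or a polynomial in the `Z`'s.
-/

open MvPolynomial

namespace Algebra

variable {R A : Type*} [CommRing R] [CommRing A] [Algebra R A] {I : Ideal A} {x : A} {s : Set A}

theorem pow_mul_mem_sup_adjoin
    (hx : ∀ z ∈ s, x * z ∈ I.restrictScalars R ⊔ Subalgebra.toSubmodule (adjoin R s))
    (a : ℕ) {b : A} (hb : b ∈ adjoin R s) :
    x ^ a * b ∈ I.restrictScalars R ⊔ Subalgebra.toSubmodule (adjoin R {x}) ⊔
      Subalgebra.toSubmodule (adjoin R s) := by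
  induction a generalizing b with
  | zero => simpa using Submodule.mem_sup_right hb
  | succ a ih =>
    have hb' : b ∈ Submodule.span R (Submonoid.closure s) := by rwa [← adjoin_eq_span]
    clear hb
    induction hb' using Submodule.span_induction with
    | mem m hm =>
      induction hm using Submonoid.closure_induction_right with
      | one =>
        rw [mul_one]
        exact Submodule.mem_sup_left <| Submodule.mem_sup_right <|
          pow_mem (self_mem_adjoin_singleton R x) _
      | mul_right m hm z hz _ =>
        obtain ⟨i, hi, c, hc, hxz⟩ := Submodule.mem_sup.1 (hx z hz)
        have hm' : m ∈ adjoin R s := Submonoid.closure_le.2 subset_adjoin hm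
        have split : x ^ (a + 1) * (m * z) = x ^ a * m * i + x ^ a * (m * c) := by
          linear_combination (x ^ a * m) * hxz.symm
        rw [split]
        exact add_mem (Submodule.mem_sup_left <| Submodule.mem_sup_left <| I.mul_mem_left _ hi)
          (ih (mul_mem hm' hc))
    | zero => simp
    | add p q _ _ hp hq => rw [mul_add]; exact add_mem hp hq
    | smul r p _ hp => rw [mul_smul_comm]; exact Submodule.smul_mem _ r hp

theorem sup_adjoin_eq_top
    (hx : ∀ z ∈ s, x * z ∈ I.restrictScalars R ⊔ Subalgebra.toSubmodule (adjoin R s))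
    (htop : adjoin R (insert x s) = ⊤) :
    I.restrictScalars R ⊔ Subalgebra.toSubmodule (adjoin R {x}) ⊔
      Subalgebra.toSubmodule (adjoin R s) = ⊤ := by
  rw [_root_.eq_top_iff, ← top_toSubmodule, ← htop, Set.insert_eq,
    adjoin_union_coe_submodule, Submodule.mul_le]
  intro p hp b hb
  have hp' : p ∈ Submodule.span R (Submonoid.closure {x}) := by rwa [← adjoin_eq_span]
  clear hp
  induction hp' using Submodule.span_induction with
  | mem m hm =>
    obtain ⟨a, rfl⟩ := Submonoid.mem_closure_singleton.1 hm
    exact pow_mul_mem_sup_adjoin hx a hb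
  | zero => simp
  | add p q _ _ hp hq => rw [add_mul]; exact add_mem hp hq
  | smul r p _ hp => rw [smul_mul_assoc]; exact Submodule.smul_mem _ r hp

end Algebra

theorem stmt_5 (R : Type*) [CommRing R] (n : ℕ)
    (O : Fin n → MvPolynomial (Fin (n + 1)) R)
    -- `O_i = X·Z_i + f_i` with `f_i ∈ R[Z₁,…,Z_n]` (here `X = X 0`, `Z_i = X i.succ`,
    -- and `R[Z₁,…,Z_n]` is the image of the renaming `Fin.succ`):
    (hO : ∀ i : Fin n,
      O i - X 0 * X i.succ ∈ (rename (Fin.succ : Fin n → Fin (n + 1)) : _ →ₐ[R] _).range) :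
    -- `R[X,Z₁,…,Z_n] = (O₁,…,O_n) + R[X] + R[Z₁,…,Z_n]`:
    (Ideal.span (Set.range O)).restrictScalars R ⊔
        Subalgebra.toSubmodule (Algebra.adjoin R {(X 0 : MvPolynomial (Fin (n + 1)) R)}) ⊔
        Subalgebra.toSubmodule (rename (Fin.succ : Fin n → Fin (n + 1)) : _ →ₐ[R] _).range =
      ⊤ := by
  have hZ : (rename (Fin.succ : Fin n → Fin (n + 1)) : _ →ₐ[R] _).range =
      Algebra.adjoin R (Set.range fun i : Fin n => (X i.succ : MvPolynomial (Fin (n + 1)) R)) := by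
    rw [rename_eq_aeval, ← Algebra.adjoin_range_eq_range_aeval]; rfl
  rw [hZ] at hO ⊢
  refine Algebra.sup_adjoin_eq_top ?_ ?_
  · rintro _ ⟨i, rfl⟩
    rw [← sub_sub_cancel (O i) (X 0 * X i.succ)]
    exact sub_mem (Submodule.mem_sup_left (Ideal.subset_span ⟨i, rfl⟩))
      (Submodule.mem_sup_right (hO i))
  · rw [← adjoin_range_X, Fin.range_fin_succ]
    rfl
end

section
/- Let Γ be a congruence subgroup and κ ∈ (1/2)ℕ, and suppose the space M_{2κ}(Γ) of modular forms of weight 2κ contains no nonzero form with q-expansion divisible by q^d (i.e. M_{2κ}(Γ) ∩ ℂ[[q]]·q^d = {0}). Then dim M_κ(Γ) ≤ ⌊(d+1)/2⌋. -/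
/-!
`V` and `W` stand for the `q`-expansions of `M_κ(Γ)` and `M_{2κ}(Γ)`, with `q = X`.

If `m = ⌊(d+1)/2⌋` and `f ∈ V` vanishes to order `m`, then `f²` lies in `W` and vanishes to
order `2m ≥ d`, so `f² = 0` and hence `f = 0`. Thus the first `m` coefficients determine an
element of `V`, and `dim V ≤ m`.
-/

open PowerSeries

theorem PowerSeries.rank_le_of_forall_X_pow_dvd_eq_zero {R : Type*} [CommRing R]
    [StrongRankCondition R] (V : Submodule R R⟦X⟧) (m : ℕ)
    (hV : ∀ f ∈ V, (X : R⟦X⟧) ^ m ∣ f → f = 0) :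
    Module.rank R V ≤ m := by
  let firstCoeffs : V →ₗ[R] (Fin m → R) :=
    LinearMap.pi fun i : Fin m => (coeff (i : ℕ)).comp V.subtype
  have hinj : Function.Injective firstCoeffs := by
    rw [← LinearMap.ker_eq_bot, LinearMap.ker_eq_bot']
    intro f hf
    refine Subtype.ext (hV f f.2 (X_pow_dvd_iff.mpr fun i hi => ?_))
    simpa [firstCoeffs] using congrFun hf ⟨i, hi⟩
  simpa using LinearMap.rank_le_of_injective firstCoeffs hinj

/-- If `M_{2κ}(Γ) ∩ ℂ[[q]]·q^d = {0}`, then `dim M_κ(Γ) ≤ ⌊(d+1)/2⌋`.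

Here the spaces of modular forms of weight `κ` and `2κ` on the congruence subgroup `Γ`
are regarded, via `q`-expansion, as subspaces `V` (weight `κ`) and `W` (weight `2κ`) of
`ℂ[[q]]`; the only properties used are that the product of two elements of `V` lies in `W`
(the square of a weight-`κ` form has weight `2κ`), and the hypothesis that no nonzero
element of `W` has `q`-expansion divisible by `q^d`. -/
theorem stmt_10 (d : ℕ) (V W : Submodule ℂ (PowerSeries ℂ))
    (hmul : ∀ f ∈ V, ∀ g ∈ V, f * g ∈ W)
    (hW : ∀ g ∈ W, (∀ i : ℕ, i < d → PowerSeries.coeff i g = 0) → g = 0) :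
    Module.rank ℂ V ≤ ((d + 1) / 2 : ℕ) := by
  refine rank_le_of_forall_X_pow_dvd_eq_zero V _ fun f hf hdvd => ?_
  have hsq : (X : ℂ⟦X⟧) ^ d ∣ f * f :=
    (pow_dvd_pow X (by omega)).trans (pow_add (X : ℂ⟦X⟧) _ _ ▸ mul_dvd_mul hdvd hdvd)
  exact mul_self_eq_zero.mp (hW _ (hmul f hf f hf) (X_pow_dvd_iff.mp hsq))
end
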